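/- Numerical core of Claim 5.2, Case 1 (nef-Fano enlarged-cylinder reduction): Let R > 1 and let χ ∈ M_ℝ satisfy ⟨λ', χ − θ⟩ = −R·D/2 and Q < ⟨λ_0, χ − θ⟩ ≤ η_0/2. Let S ⊆ {1, …, n} be nonempty with ⟨λ', β_i⟩ ≥ 0 for all i ∈ S, and set μ := χ + ∑_{i∈S} β_i. Then: (a) |⟨λ_0, μ − θ⟩| ≤ η_0/2; (b) ⟨λ', μ − θ⟩ ≤ (1 − R/2)·D < R·D/2; (c) if ⟨λ', β_i⟩ > 0 for some i ∈ S, then ⟨λ', μ − θ⟩ > −R·D/2; (d) if ⟨λ', β_i⟩ = 0 for all i ∈ S, then ⟨λ', μ − θ⟩ = −R·D/2 and ⟨λ_0, μ − θ⟩ < ⟨λ_0, χ − θ⟩. -/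

import Mathlib

noncomputable section

/-- The standard pairing between `N_ℝ = ℝ²` and `M_ℝ = ℝ²`. -/
def pairR (lam chi : Fin 2 → ℝ) : ℝ := ∑ k, lam k * chi k

/-- `D := −∑_{i : ⟨λ', β_i⟩ ≤ 0} ⟨λ', β_i⟩`. -/
def Dval {n : ℕ} (β : Fin n → Fin 2 → ℝ) (lam' : Fin 2 → ℝ) : ℝ :=
  -∑ i ∈ Finset.univ.filter (fun i => pairR lam' (β i) ≤ 0), pairR lam' (β i)

/-- `Q := η_0/2 + ∑_{i : ⟨λ', β_i⟩ < 0} ⟨λ_0, β_i⟩`, where `η_0 = −∑_i ⟨λ_0, β_i⟩`. -/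
def Qval {n : ℕ} (β : Fin n → Fin 2 → ℝ) (lam0 lam' : Fin 2 → ℝ) : ℝ :=
  (-∑ i, pairR lam0 (β i)) / 2 +
    ∑ i ∈ Finset.univ.filter (fun i => pairR lam' (β i) < 0), pairR lam0 (β i)

/-!
Write `w' i = ⟨λ', β_i⟩`. Since `∑ w' i = 0`, the constant `D` is also the sum of the positive
`w' i`, so adding the `β_i`, `i ∈ S` (all with `w' i ≥ 0`) moves `⟨λ', ·⟩` up by an amount in
`[0, D]`; and `D > 0` because the `β_i` span while `λ' ≠ 0`. Every `β_i` pairs negatively with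
`λ_0`, so `⟨λ_0, ·⟩` strictly decreases, but not below `−η_0/2`: `S` is disjoint from
`{i | w' i < 0}`, so `∑_{i ∈ S} ⟨λ_0, β_i⟩ ≥ ∑_i ⟨λ_0, β_i⟩ − ∑_{w' i < 0} ⟨λ_0, β_i⟩`, which
together with `⟨λ_0, χ − θ⟩ > Q` is exactly what is needed.
-/

open Finset Matrix

namespace Finset

variable {ι α : Type*} [Fintype ι] [AddCommGroup α] [LinearOrder α] (w : ι → α)

theorem neg_sum_filter_nonpos_eq_sum_filter_pos (hw : ∑ i, w i = 0) :
    -∑ i with w i ≤ 0, w i = ∑ i with 0 < w i, w i := by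
  have hsplit := sum_filter_add_sum_filter_not univ (fun i => w i ≤ 0) w
  simp only [not_le] at hsplit
  exact neg_eq_of_add_eq_zero_right (hsplit.trans hw)

theorem sum_le_sum_filter_pos [IsOrderedAddMonoid α] (s : Finset ι) :
    ∑ i ∈ s, w i ≤ ∑ i with 0 < w i, w i := by
  rw [← sum_filter_add_sum_filter_not s (fun i => 0 < w i)]
  calc ∑ i ∈ s with 0 < w i, w i + ∑ i ∈ s with ¬0 < w i, w i
      ≤ ∑ i ∈ s with 0 < w i, w i :=
        add_le_of_nonpos_right (sum_nonpos fun i hi => not_lt.mp (mem_filter.mp hi).2)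
    _ ≤ ∑ i with 0 < w i, w i :=
        sum_le_sum_of_subset_of_nonneg (filter_subset_filter _ (subset_univ s))
          fun i hi _ => (mem_filter.mp hi).2.le

theorem exists_neg_of_sum_eq_zero [IsOrderedAddMonoid α] (hw : ∑ i, w i = 0)
    (hne : ∃ i, w i ≠ 0) : ∃ i, w i < 0 := by
  by_contra! hnonneg
  obtain ⟨i, hi⟩ := hne
  exact hi ((sum_eq_zero_iff_of_nonneg fun i _ => hnonneg i).mp hw i (mem_univ i))

theorem neg_sum_filter_nonpos_pos [IsOrderedAddMonoid α] (hneg : ∃ i, w i < 0) :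
    0 < -∑ i with w i ≤ 0, w i := by
  classical
  obtain ⟨i₀, hi₀⟩ := hneg
  have hmem : i₀ ∈ univ.filter (fun i => w i ≤ 0) := mem_filter.mpr ⟨mem_univ i₀, hi₀.le⟩
  rw [← add_sum_erase _ w hmem, neg_pos]
  exact add_neg_of_neg_of_nonpos hi₀
    (sum_nonpos fun i hi => (mem_filter.mp (mem_of_mem_erase hi)).2)

theorem sum_le_sum_add_sum_of_nonpos [IsOrderedAddMonoid α] (hw : ∀ i, w i ≤ 0)
    {s t : Finset ι} (hst : Disjoint s t) :
    ∑ i, w i ≤ ∑ i ∈ s, w i + ∑ i ∈ t, w i := by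
  classical
  rw [← sum_union hst, ← sum_add_sum_compl (s ∪ t)]
  exact add_le_of_nonpos_right (sum_nonpos fun i _ => hw i)

end Finset

theorem Matrix.exists_dotProduct_ne_zero_of_span_eq_top {R ι m : Type*} [CommSemiring R]
    [Fintype m] [DecidableEq m] {v : ι → m → R} (hv : Submodule.span R (Set.range v) = ⊤)
    {l : m → R} (hl : l ≠ 0) : ∃ i, l ⬝ᵥ v i ≠ 0 := by
  by_contra! h
  refine hl ((dotProductEquiv R m).map_eq_zero_iff.mp (LinearMap.ext_on_range hv fun i => ?_))
  simpa using h i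

theorem pairR_eq_dotProduct (l x : Fin 2 → ℝ) : pairR l x = l ⬝ᵥ x := rfl

theorem pairR_sum {ι : Type*} (l : Fin 2 → ℝ) (s : Finset ι) (f : ι → Fin 2 → ℝ) :
    pairR l (∑ i ∈ s, f i) = ∑ i ∈ s, pairR l (f i) :=
  dotProduct_sum l s f

section Constants

variable {n : ℕ} (β : Fin n → Fin 2 → ℝ) {lam' : Fin 2 → ℝ}

theorem Dval_eq_sum_filter_pos (hω : pairR lam' (∑ i, β i) = 0) :
    Dval β lam' = ∑ i with 0 < pairR lam' (β i), pairR lam' (β i) :=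
  neg_sum_filter_nonpos_eq_sum_filter_pos _ (by rwa [← pairR_sum])

theorem sum_le_Dval (hω : pairR lam' (∑ i, β i) = 0) (S : Finset (Fin n)) :
    ∑ i ∈ S, pairR lam' (β i) ≤ Dval β lam' := by
  rw [Dval_eq_sum_filter_pos β hω]
  exact sum_le_sum_filter_pos _ S

theorem Dval_pos (hω : pairR lam' (∑ i, β i) = 0)
    (hspan : Submodule.span ℝ (Set.range β) = ⊤) (hlam' : lam' ≠ 0) : 0 < Dval β lam' :=
  neg_sum_filter_nonpos_pos _ <| exists_neg_of_sum_eq_zero _ (by rwa [← pairR_sum]) <|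
    exists_dotProduct_ne_zero_of_span_eq_top hspan hlam'

theorem half_sum_sub_sum_le_Qval (lam0 : Fin 2 → ℝ) (hlam0 : ∀ i, pairR lam0 (β i) ≤ 0)
    {S : Finset (Fin n)} (hS : ∀ i ∈ S, 0 ≤ pairR lam' (β i)) :
    (∑ i, pairR lam0 (β i)) / 2 - ∑ i ∈ S, pairR lam0 (β i) ≤ Qval β lam0 lam' := by
  have hdisj : Disjoint S (univ.filter fun i => pairR lam' (β i) < 0) :=
    disjoint_left.mpr fun i hiS hiF => (mem_filter.mp hiF).2.not_ge (hS i hiS)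
  have := sum_le_sum_add_sum_of_nonpos _ hlam0 hdisj
  unfold Qval
  linarith

end Constants

theorem claim_5_2_case_1_general {n : ℕ}
    (β : Fin n → Fin 2 → ℝ)
    (hspan : Submodule.span ℝ (Set.range β) = ⊤)
    (lam0 : Fin 2 → ℝ) (hlam0 : ∀ i, pairR lam0 (β i) < 0)
    (lam' : Fin 2 → ℝ) (hlam'ne : lam' ≠ 0)
    (hlam'ω : pairR lam' (∑ i, β i) = 0)
    (θ : Fin 2 → ℝ)
    (R : ℝ) (hR : 1 < R)
    (χ : Fin 2 → ℝ)
    (hχ1 : pairR lam' (χ - θ) = -(R * Dval β lam' / 2))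
    (hχ2 : Qval β lam0 lam' < pairR lam0 (χ - θ))
    (hχ3 : pairR lam0 (χ - θ) ≤ (-∑ i, pairR lam0 (β i)) / 2)
    (S : Finset (Fin n)) (hS : S.Nonempty)
    (hSnonneg : ∀ i ∈ S, 0 ≤ pairR lam' (β i))
    (μ : Fin 2 → ℝ) (hμ : μ = χ + ∑ i ∈ S, β i) :
    |pairR lam0 (μ - θ)| ≤ (-∑ i, pairR lam0 (β i)) / 2 ∧
      (pairR lam' (μ - θ) ≤ (1 - R / 2) * Dval β lam' ∧
        (1 - R / 2) * Dval β lam' < R * Dval β lam' / 2) ∧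
      ((∃ i ∈ S, 0 < pairR lam' (β i)) → -(R * Dval β lam' / 2) < pairR lam' (μ - θ)) ∧
      ((∀ i ∈ S, pairR lam' (β i) = 0) →
        pairR lam' (μ - θ) = -(R * Dval β lam' / 2) ∧
          pairR lam0 (μ - θ) < pairR lam0 (χ - θ)) := by
  have hμpair (l : Fin 2 → ℝ) :
      pairR l (μ - θ) = pairR l (χ - θ) + ∑ i ∈ S, pairR l (β i) := by
    rw [← pairR_sum, pairR_eq_dotProduct, pairR_eq_dotProduct, pairR_eq_dotProduct, hμ,
      add_sub_right_comm, dotProduct_add]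
  have hD := Dval_pos β hlam'ω hspan hlam'ne
  have hSD := sum_le_Dval β hlam'ω S
  have hQ := half_sum_sub_sum_le_Qval β lam0 (fun i => (hlam0 i).le) hSnonneg
  have hSlam0 : ∑ i ∈ S, pairR lam0 (β i) < 0 := sum_neg (fun i _ => hlam0 i) hS
  refine ⟨?_, ⟨?_, by linarith [mul_pos (sub_pos.2 hR) hD]⟩, ?_, fun hzero => ?_⟩
  · rw [abs_le, hμpair]
    constructor <;> linarith
  · rw [hμpair, hχ1]
    linarith
  · rintro ⟨i, hiS, hipos⟩
    rw [hμpair, hχ1]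
    linarith [sum_pos' hSnonneg ⟨i, hiS, hipos⟩]
  · rw [hμpair, hμpair, hχ1, sum_eq_zero hzero]
    constructor <;> linarith

/-- numerical core of Claim 5.2, Case 1. -/
theorem claim_5_2_case_1 {n : ℕ} (hn : 1 ≤ n)
    (β : Fin n → Fin 2 → ℝ)
    (hβint : ∀ i, ∃ b : Fin 2 → ℤ, β i = fun k => ((b k : ℝ)))
    (hspan : Submodule.span ℝ (Set.range β) = ⊤)
    (lam0 : Fin 2 → ℝ) (hlam0 : ∀ i, pairR lam0 (β i) < 0)
    (lam' : Fin 2 → ℝ) (hlam'ne : lam' ≠ 0)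
    (hlam'ω : pairR lam' (∑ i, β i) = 0)
    (θ : Fin 2 → ℝ)
    (R : ℝ) (hR : 1 < R)
    (χ : Fin 2 → ℝ)
    (hχ1 : pairR lam' (χ - θ) = -(R * Dval β lam' / 2))
    (hχ2 : Qval β lam0 lam' < pairR lam0 (χ - θ))
    (hχ3 : pairR lam0 (χ - θ) ≤ (-∑ i, pairR lam0 (β i)) / 2)
    (S : Finset (Fin n)) (hS : S.Nonempty)
    (hSnonneg : ∀ i ∈ S, 0 ≤ pairR lam' (β i))
    (μ : Fin 2 → ℝ) (hμ : μ = χ + ∑ i ∈ S, β i) :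
    |pairR lam0 (μ - θ)| ≤ (-∑ i, pairR lam0 (β i)) / 2 ∧
      (pairR lam' (μ - θ) ≤ (1 - R / 2) * Dval β lam' ∧
        (1 - R / 2) * Dval β lam' < R * Dval β lam' / 2) ∧
      ((∃ i ∈ S, 0 < pairR lam' (β i)) → -(R * Dval β lam' / 2) < pairR lam' (μ - θ)) ∧
      ((∀ i ∈ S, pairR lam' (β i) = 0) →
        pairR lam' (μ - θ) = -(R * Dval β lam' / 2) ∧
          pairR lam0 (μ - θ) < pairR lam0 (χ - θ)) :=
  claim_5_2_case_1_general β hspan lam0 hlam0 lam' hlam'ne hlam'ω θ R hR χ hχ1 hχ2 hχ3 S hS hSnonneg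
    μ hμ
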